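/- For 0 < α < 1, every coefficient of the power series expansion of D(x) = (1+x)^α - (1-x²)^α about 0 is nonnegative, and coefficients of index ≥ 1 are strictly positive. Explicitly, the coefficient of x^(2r+1) is C(α, 2r+1) > 0 and the coefficient of x^(2n) is C(α, 2n) - (-1)^n C(α, n) > 0 for n ≥ 1. -/

import Mathlib

/-!
Both `(1 + x)^α` and `(1 - x²)^α` are binomial series, and the second contributes only even
powers, which gives the expansion. For `0 < α < 1` the ratio
`C(α, n + 2) / C(α, n + 1) = (α - n - 1) / (n + 2)` lies in `(-1, 0)`, so
`a n = (-1)^n C(α, n + 1)` is positive and strictly decreasing. Hence `C(α, 2r + 1) = a (2r) > 0`,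
and for `n ≥ 1` the even coefficient `C(α, 2n) - (-1)^n C(α, n) = a (n - 1) - a (2n - 1)` is
positive.
-/

/-- Generalized binomial coefficient C(α, n) = α(α-1)⋯(α-n+1)/n! for real α. -/
noncomputable def genBinom (α : ℝ) (n : ℕ) : ℝ :=
  (∏ i ∈ Finset.range n, (α - i)) / n.factorial
/-- Coefficients of the power series of D(x) = (1+x)^α - (1-x²)^α. -/
noncomputable def Dcoeff (α : ℝ) (m : ℕ) : ℝ :=
  if m = 0 then 0
  else if m % 2 = 1 then genBinom α m
  else genBinom α m - (-1 : ℝ) ^ (m / 2) * genBinom α (m / 2)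

theorem genBinom_eq_choose (α : ℝ) (n : ℕ) : genBinom α n = Ring.choose α n := by
  rw [Ring.choose_eq_smul, ← Polynomial.aeval_eq_smeval, Polynomial.aeval_def,
    Polynomial.eval₂_eq_eval_map, descPochhammer_map, descPochhammer_eval_eq_prod_range,
    genBinom, smul_eq_mul, div_eq_inv_mul]

theorem hasSum_genBinom_mul_pow (α : ℝ) {x : ℝ} (hx : |x| < 1) :
    HasSum (fun n => genBinom α n * x ^ n) ((1 + x) ^ α) := by
  have hx' : x ∈ Metric.eball (0 : ℝ) 1 := by simpa [← ofReal_norm] using hx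
  simpa [genBinom_eq_choose, binomialSeries, mul_comm] using
    (Real.one_add_rpow_hasFPowerSeriesOnBall_zero (a := α)).hasSum hx'

theorem genBinom_zero (α : ℝ) : genBinom α 0 = 1 := by simp [genBinom]

theorem genBinom_succ (α : ℝ) (n : ℕ) :
    genBinom α (n + 1) = (α - n) / (n + 1) * genBinom α n := by
  rw [genBinom, genBinom, Finset.prod_range_succ, Nat.factorial_succ]
  push_cast
  field_simp

theorem neg_one_pow_mul_genBinom_succ_succ (α : ℝ) (n : ℕ) :
    (-1) ^ (n + 1) * genBinom α (n + 2) =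
      (n + 1 - α) / (n + 2) * ((-1) ^ n * genBinom α (n + 1)) := by
  rw [genBinom_succ α (n + 1), pow_succ]
  push_cast
  ring

theorem neg_one_pow_mul_genBinom_succ_pos {α : ℝ} (hα0 : 0 < α) (hα1 : α < 1) (n : ℕ) :
    0 < (-1) ^ n * genBinom α (n + 1) := by
  induction n with
  | zero => simpa [genBinom_succ, genBinom_zero] using hα0
  | succ n ih =>
    rw [neg_one_pow_mul_genBinom_succ_succ]
    exact mul_pos (div_pos (by linarith) (by positivity)) ih

theorem strictAnti_neg_one_pow_mul_genBinom_succ {α : ℝ} (hα0 : 0 < α) (hα1 : α < 1) :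
    StrictAnti fun n : ℕ => (-1) ^ n * genBinom α (n + 1) := by
  refine strictAnti_nat_of_succ_lt fun n => ?_
  have hratio : (n + 1 - α) / (n + 2) < 1 := by
    rw [div_lt_one (by positivity)]
    linarith
  rw [neg_one_pow_mul_genBinom_succ_succ]
  exact mul_lt_of_lt_one_left (neg_one_pow_mul_genBinom_succ_pos hα0 hα1 n) hratio

theorem genBinom_two_mul_add_one_pos {α : ℝ} (hα0 : 0 < α) (hα1 : α < 1) (r : ℕ) :
    0 < genBinom α (2 * r + 1) := by
  simpa using neg_one_pow_mul_genBinom_succ_pos hα0 hα1 (2 * r)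

theorem genBinom_two_mul_sub_pos {α : ℝ} (hα0 : 0 < α) (hα1 : α < 1) {n : ℕ} (hn : 1 ≤ n) :
    0 < genBinom α (2 * n) - (-1) ^ n * genBinom α n := by
  obtain ⟨k, rfl⟩ := Nat.exists_eq_add_of_le' hn
  have hlt := strictAnti_neg_one_pow_mul_genBinom_succ hα0 hα1 (show k < 2 * k + 1 by omega)
  have hodd : (-1 : ℝ) ^ (2 * k + 1) = -1 := Odd.neg_one_pow ⟨k, rfl⟩
  simp only [hodd, pow_succ] at hlt ⊢
  rw [show 2 * (k + 1) = 2 * k + 1 + 1 by ring]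
  linarith

theorem Dcoeff_two_mul_add_one (α : ℝ) (r : ℕ) :
    Dcoeff α (2 * r + 1) = genBinom α (2 * r + 1) := by
  rw [Dcoeff, if_neg (by omega), if_pos (by omega)]

-- At `n = 0` both sides vanish because `genBinom α 0 = 1`.
theorem Dcoeff_two_mul (α : ℝ) (n : ℕ) :
    Dcoeff α (2 * n) = genBinom α (2 * n) - (-1) ^ n * genBinom α n := by
  rcases Nat.eq_zero_or_pos n with rfl | hn
  · simp [Dcoeff, genBinom_zero]
  · rw [Dcoeff, if_neg (by omega), if_neg (by omega), Nat.mul_div_cancel_left n two_pos]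

theorem Dcoeff_pos {α : ℝ} (hα0 : 0 < α) (hα1 : α < 1) {m : ℕ} (hm : 1 ≤ m) :
    0 < Dcoeff α m := by
  obtain ⟨k, rfl | rfl⟩ := Nat.even_or_odd' m
  · rw [Dcoeff_two_mul]
    exact genBinom_two_mul_sub_pos hα0 hα1 (by omega)
  · rw [Dcoeff_two_mul_add_one]
    exact genBinom_two_mul_add_one_pos hα0 hα1 k

theorem Dcoeff_nonneg {α : ℝ} (hα0 : 0 < α) (hα1 : α < 1) (m : ℕ) : 0 ≤ Dcoeff α m := by
  rcases Nat.eq_zero_or_pos m with rfl | hm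
  · simp [Dcoeff]
  · exact (Dcoeff_pos hα0 hα1 hm).le

-- `extend` puts the `n`-th term of the series of `(1 - x²)^α` at index `2n` and zeros elsewhere.
theorem Dcoeff_mul_pow (α x : ℝ) (m : ℕ) :
    Dcoeff α m * x ^ m = genBinom α m * x ^ m -
      Function.extend (2 * ·) (fun n => genBinom α n * (-x ^ 2) ^ n) 0 m := by
  obtain ⟨k, rfl | rfl⟩ := Nat.even_or_odd' m
  · rw [(mul_right_injective₀ two_ne_zero).extend_apply, Dcoeff_two_mul, neg_pow, pow_mul]
    ring
  · rw [Function.extend_apply' _ _ _ (by omega), Dcoeff_two_mul_add_one]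
    simp

theorem hasSum_Dcoeff_mul_pow (α : ℝ) {x : ℝ} (hx : |x| < 1) :
    HasSum (fun m => Dcoeff α m * x ^ m) ((1 + x) ^ α - (1 - x ^ 2) ^ α) := by
  have hx2 : |-x ^ 2| < 1 := by
    rw [abs_neg, abs_pow, sq_lt_one_iff_abs_lt_one, abs_abs]
    exact hx
  have heven := (hasSum_extend_zero (mul_right_injective₀ (two_ne_zero' ℕ))).2
    (hasSum_genBinom_mul_pow α hx2)
  rw [← sub_eq_add_neg] at heven
  simpa only [Dcoeff_mul_pow] using (hasSum_genBinom_mul_pow α hx).sub heven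

theorem stmt_11 (α : ℝ) (hα0 : 0 < α) (hα1 : α < 1) :
    (∀ x : ℝ, |x| < 1 →
      HasSum (fun m : ℕ => Dcoeff α m * x ^ m) ((1 + x) ^ α - (1 - x ^ 2) ^ α)) ∧
    (∀ m : ℕ, 0 ≤ Dcoeff α m) ∧
    (∀ m : ℕ, 1 ≤ m → 0 < Dcoeff α m) ∧
    (∀ r : ℕ, Dcoeff α (2 * r + 1) = genBinom α (2 * r + 1) ∧ 0 < genBinom α (2 * r + 1)) ∧
    (∀ n : ℕ, 1 ≤ n →
      Dcoeff α (2 * n) = genBinom α (2 * n) - (-1 : ℝ) ^ n * genBinom α n ∧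
      0 < genBinom α (2 * n) - (-1 : ℝ) ^ n * genBinom α n) :=
  ⟨fun _ hx => hasSum_Dcoeff_mul_pow α hx, Dcoeff_nonneg hα0 hα1,
    fun _ hm => Dcoeff_pos hα0 hα1 hm,
    fun r => ⟨Dcoeff_two_mul_add_one α r, genBinom_two_mul_add_one_pos hα0 hα1 r⟩,
    fun n hn => ⟨Dcoeff_two_mul α n, genBinom_two_mul_sub_pos hα0 hα1 hn⟩⟩
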